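/- The toric ring K[A(B_1,...,B_d)] of a nested configuration has a combinatorial pure subring isomorphic to K[A]. Consequently, if K[A(B_1,...,B_d)] is normal (resp. very ample), then K[A] is normal (resp. very ample). -/

import Mathlib

open scoped BigOperators

section Semigroup
variable {σ : Type*} [Fintype σ]

/-- Cast an exponent vector to an integer vector. -/
def vecZ (v : σ → ℕ) : σ → ℤ := fun i => (v i : ℤ)

/-- Cast an integer vector to a rational vector. -/
def vecQ (v : σ → ℤ) : σ → ℚ := fun i => (v i : ℚ)

/-- The affine semigroup `ℤ_{≥0}{a_1,…,a_n}` generated by a set of exponent vectors. -/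
def nnSpan (S : Set (σ → ℕ)) : AddSubmonoid (σ → ℤ) := AddSubmonoid.closure (vecZ '' S)

/-- The group `ℤ{a_1,…,a_n}` generated by a set of exponent vectors. -/
def zSpan (S : Set (σ → ℕ)) : AddSubgroup (σ → ℤ) := AddSubgroup.closure (vecZ '' S)

/-- The rational cone `ℚ_{≥0}{a_1,…,a_n}` (integer points thereof). -/
def qCone (S : Set (σ → ℕ)) : Set (σ → ℤ) :=
  {v | ∃ (n : ℕ) (f : Fin n → (σ → ℕ)) (c : Fin n → ℚ),
    (∀ k, f k ∈ S) ∧ (∀ k, 0 ≤ c k) ∧ vecQ v = ∑ k, c k • vecQ (vecZ (f k))}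

/-- Normality of the affine semigroup generated by `S`:
`ℤ_{≥0} S = ℤ S ∩ ℚ_{≥0} S`. -/
def IsNormalCfg (S : Set (σ → ℕ)) : Prop :=
  ∀ v : σ → ℤ, v ∈ zSpan S → v ∈ qCone S → v ∈ nnSpan S

/-- Very ampleness: `(ℤ S ∩ ℚ_{≥0} S) \ ℤ_{≥0} S` is a finite set. -/
def IsVeryAmpleCfg (S : Set (σ → ℕ)) : Prop :=
  (((zSpan S : Set (σ → ℤ)) ∩ qCone S) \ (nnSpan S : Set (σ → ℤ))).Finite

/-- A configuration: a finite set of exponent vectors lying on a common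
affine hyperplane `w · x = 1`. -/
def IsConfiguration (S : Set (σ → ℕ)) : Prop :=
  S.Finite ∧ ∃ w : σ → ℚ, ∀ v ∈ S, ∑ i, w i * (v i : ℚ) = 1

end Semigroup

section Nested
variable {d : ℕ} {μ : Fin d → ℕ}

/-- Embed a vector of exponents of the block of variables `u^{(i)}`
into the exponent space of all variables `u^{(1)},…,u^{(d)}`. -/
def blockEmb (μ : Fin d → ℕ) (i : Fin d) (v : Fin (μ i) → ℕ) :
    ((Σ j : Fin d, Fin (μ j)) → ℕ) :=
  fun p => if h : p.1 = i then v (h ▸ p.2) else 0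

/-- The nested configuration `A(B_1,…,B_d)`: exponent vectors of the monomials
`m_{j_1}^{(i_1)} ⋯ m_{j_r}^{(i_r)}` where `t_{i_1} ⋯ t_{i_r} ∈ A`. -/
def Nested (A : Set (Fin d → ℕ)) (B : ∀ i : Fin d, Set (Fin (μ i) → ℕ)) :
    Set ((Σ j : Fin d, Fin (μ j)) → ℕ) :=
  {v | ∃ a ∈ A, ∃ c : ∀ i : Fin d, Multiset (Fin (μ i) → ℕ),
    (∀ i, Multiset.card (c i) = a i) ∧ (∀ i, ∀ b ∈ c i, b ∈ B i) ∧
    v = ∑ i : Fin d, blockEmb μ i (c i).sum}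

end Nested

/-- `S` is (the exponent-vector set of) a combinatorial pure subring of `T`:
`S` consists of the elements of `T` lying on a face (cut out by a supporting
hyperplane) of the convex hull of `T`. -/
def IsCPS {σ : Type*} [Fintype σ] (S T : Set (σ → ℕ)) : Prop :=
  S ⊆ T ∧ ∃ (w : σ → ℚ) (b : ℚ), (∀ v ∈ T, ∑ i, w i * (v i : ℚ) ≤ b) ∧
    S = {v ∈ T | ∑ i, w i * (v i : ℚ) = b}

/-!
Pick in each `B_i` a vertex `b_i` together with a linear form `w_i` that is nonnegative on `B_i`
and vanishes only at `b_i`. Then `∑ w_i` is nonnegative on `A(B_1,…,B_d)` and vanishes exactly on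
the products whose factors from block `i` all equal `u^{b_i}`, i.e. on the image of `A` under the
injective monomial map `t_i ↦ u^{b_i}`. So `A` is the set of points of the nested configuration on
a face through the origin, and normality and very ampleness descend to it: a sum of generators
on which the form vanishes uses only generators from the face.
-/

open Matrix

section Pairing
variable {σ : Type*}

def pairing [Fintype σ] (w : σ → ℚ) : (σ → ℤ) →+ ℚ where
  toFun x := w ⬝ᵥ vecQ x
  map_zero' := by
    show w ⬝ᵥ vecQ 0 = 0
    rw [show vecQ (0 : σ → ℤ) = 0 from funext fun i => by simp [vecQ], dotProduct_zero]
  map_add' x y := by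
    rw [← dotProduct_add]
    congr 1
    funext i
    simp [vecQ]

lemma pairing_apply [Fintype σ] (w : σ → ℚ) (x : σ → ℤ) : pairing w x = w ⬝ᵥ vecQ x := rfl

lemma pairing_vecZ [Fintype σ] (w : σ → ℚ) (v : σ → ℕ) :
    pairing w (vecZ v) = ∑ i, w i * (v i : ℚ) := by
  simp [pairing_apply, dotProduct, vecQ, vecZ]

lemma mem_nnSpan_zero_locus {T : Set (σ → ℕ)} {ℓ : (σ → ℤ) →+ ℚ}
    (hT : ∀ v ∈ T, 0 ≤ ℓ (vecZ v)) {x : σ → ℤ} (hx : x ∈ nnSpan T) (hx0 : ℓ x = 0) :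
    x ∈ nnSpan {v ∈ T | ℓ (vecZ v) = 0} := by
  refine (AddSubmonoid.closure_induction
    (motive := fun y _ => 0 ≤ ℓ y ∧ (ℓ y = 0 → y ∈ nnSpan {v ∈ T | ℓ (vecZ v) = 0}))
    ?_ ?_ ?_ hx).2 hx0
  · rintro _ ⟨v, hv, rfl⟩
    exact ⟨hT v hv, fun h => AddSubmonoid.subset_closure ⟨v, ⟨hv, h⟩, rfl⟩⟩
  · exact ⟨by simp, fun _ => zero_mem _⟩
  · rintro y z - - ⟨hy, hy'⟩ ⟨hz, hz'⟩
    rw [map_add]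
    refine ⟨add_nonneg hy hz, fun h => add_mem (hy' ?_) (hz' ?_)⟩ <;> linarith

lemma eq_zero_of_mem_zSpan {A : Set (σ → ℕ)} {ℓ : (σ → ℤ) →+ ℚ}
    (hA : ∀ a ∈ A, ℓ (vecZ a) = 0) {x : σ → ℤ} (hx : x ∈ zSpan A) : ℓ x = 0 := by
  have : zSpan A ≤ ℓ.ker := by
    rw [zSpan, AddSubgroup.closure_le]
    rintro _ ⟨a, ha, rfl⟩
    exact hA a ha
  exact this hx

end Pairing

section MonomialMap
variable {σ τ : Type*} [Fintype σ]

lemma vecZ_mulVec (M : Matrix τ σ ℕ) (a : σ → ℕ) : vecZ (M *ᵥ a) = M.map (↑) *ᵥ vecZ a :=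
  funext fun p => (Nat.castRingHom ℤ).map_mulVec M a p

lemma vecQ_mulVec (M : Matrix τ σ ℤ) (x : σ → ℤ) : vecQ (M *ᵥ x) = M.map (↑) *ᵥ vecQ x :=
  funext fun p => (Int.castRingHom ℚ).map_mulVec M x p

variable {A : Set (σ → ℕ)} {T : Set (τ → ℕ)} {M : Matrix τ σ ℕ}

lemma mulVec_mem_zSpan (hM : ∀ a ∈ A, M *ᵥ a ∈ T) {x : σ → ℤ} (hx : x ∈ zSpan A) :
    M.map (↑) *ᵥ x ∈ zSpan T := by
  have : zSpan A ≤ (zSpan T).comap (M.map ((↑) : ℕ → ℤ)).mulVecLin.toAddMonoidHom := by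
    rw [zSpan, AddSubgroup.closure_le]
    rintro _ ⟨a, ha, rfl⟩
    exact AddSubgroup.subset_closure ⟨_, hM a ha, vecZ_mulVec M a⟩
  exact this hx

lemma mulVec_mem_qCone (hM : ∀ a ∈ A, M *ᵥ a ∈ T) {x : σ → ℤ} (hx : x ∈ qCone A) :
    M.map (↑) *ᵥ x ∈ qCone T := by
  obtain ⟨n, f, c, hf, hc, hx⟩ := hx
  refine ⟨n, fun k => M *ᵥ f k, c, fun k => hM _ (hf k), hc, ?_⟩
  rw [vecQ_mulVec, hx, Matrix.mulVec_sum]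
  refine Finset.sum_congr rfl fun k _ => ?_
  rw [Matrix.mulVec_smul, vecZ_mulVec, vecQ_mulVec, Matrix.map_map]

lemma nnSpan_image_mulVec (M : Matrix τ σ ℕ) (A : Set (σ → ℕ)) :
    nnSpan ((M *ᵥ ·) '' A) = (nnSpan A).map (M.map ((↑) : ℕ → ℤ)).mulVecLin.toAddMonoidHom := by
  rw [nnSpan, nnSpan, AddMonoidHom.map_mclosure, Set.image_image, Set.image_image]
  exact congrArg _ (Set.image_congr fun a _ => vecZ_mulVec M a)

end MonomialMap

section FaceEmbedding
variable {σ τ : Type*} [Fintype σ] [Fintype τ]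

/-- `M` embeds the configuration `A` as the set of points of `T` on a face through the origin of
the cone over `T`; in toric terms, `t ↦ u^{M t}` identifies `K[A]` with a combinatorial pure
subring of `K[T]`. -/
structure IsFaceEmbedding (M : Matrix τ σ ℕ) (A : Set (σ → ℕ)) (T : Set (τ → ℕ)) : Prop where
  injective : Function.Injective (M.map ((↑) : ℕ → ℤ)).mulVec
  exists_face : ∃ w : τ → ℚ, (∀ v ∈ T, 0 ≤ pairing w (vecZ v)) ∧
    (M *ᵥ ·) '' A = {v ∈ T | pairing w (vecZ v) = 0}

namespace IsFaceEmbedding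
variable {A : Set (σ → ℕ)} {T : Set (τ → ℕ)} {M : Matrix τ σ ℕ}

lemma mulVec_mem (hM : IsFaceEmbedding M A T) : ∀ a ∈ A, M *ᵥ a ∈ T := by
  obtain ⟨w, -, hface⟩ := hM.exists_face
  exact fun a ha => (hface ▸ Set.mem_image_of_mem _ ha : M *ᵥ a ∈ {v ∈ T | _}).1

lemma isCPS (hM : IsFaceEmbedding M A T) : IsCPS ((M *ᵥ ·) '' A) T := by
  obtain ⟨w, hT, hface⟩ := hM.exists_face
  refine ⟨hface ▸ Set.sep_subset _ _, -w, 0, fun v hv => ?_, ?_⟩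
  · simpa [pairing_vecZ] using hT v hv
  · simpa [pairing_vecZ] using hface

lemma nonempty_addEquiv (hM : IsFaceEmbedding M A T) :
    Nonempty (nnSpan ((M *ᵥ ·) '' A) ≃+ nnSpan A) := by
  rw [nnSpan_image_mulVec]
  exact ⟨(AddSubmonoid.equivMapOfInjective _ _ hM.injective).symm⟩

lemma mem_nnSpan_of_mulVec_mem_nnSpan (hM : IsFaceEmbedding M A T) {x : σ → ℤ}
    (hx : x ∈ zSpan A) (hMx : M.map (↑) *ᵥ x ∈ nnSpan T) : x ∈ nnSpan A := by
  obtain ⟨w, hT, hface⟩ := hM.exists_face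
  have hA : ∀ a ∈ A, pairing w (vecZ (M *ᵥ a)) = 0 := fun a ha =>
    (show M *ᵥ a ∈ {v ∈ T | pairing w (vecZ v) = 0} from hface ▸ ⟨a, ha, rfl⟩).2
  have hw : pairing w (M.map (↑) *ᵥ x) = 0 :=
    eq_zero_of_mem_zSpan (ℓ := (pairing w).comp (M.map ((↑) : ℕ → ℤ)).mulVecLin.toAddMonoidHom)
      (fun a ha => by simpa [vecZ_mulVec] using hA a ha) hx
  have := mem_nnSpan_zero_locus hT hMx hw
  rw [← hface, nnSpan_image_mulVec] at this
  obtain ⟨y, hy, hyx⟩ := this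
  rwa [← hM.injective hyx]

lemma isNormalCfg (hM : IsFaceEmbedding M A T) (hT : IsNormalCfg T) : IsNormalCfg A :=
  fun _ hz hq => hM.mem_nnSpan_of_mulVec_mem_nnSpan hz
    (hT _ (mulVec_mem_zSpan hM.mulVec_mem hz) (mulVec_mem_qCone hM.mulVec_mem hq))

lemma isVeryAmpleCfg (hM : IsFaceEmbedding M A T) (hT : IsVeryAmpleCfg T) :
    IsVeryAmpleCfg A := by
  refine (hT.preimage hM.injective.injOn).subset ?_
  rintro x ⟨⟨hz, hq⟩, hn⟩
  exact ⟨⟨mulVec_mem_zSpan hM.mulVec_mem hz, mulVec_mem_qCone hM.mulVec_mem hq⟩,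
    fun h => hn (hM.mem_nnSpan_of_mulVec_mem_nnSpan hz h)⟩

end IsFaceEmbedding

end FaceEmbedding

lemma dotProduct_lt_dotProduct_self_of_ne {ι R : Type*} [Fintype ι] [CommRing R] [LinearOrder R]
    [IsStrictOrderedRing R] {y z : ι → R} (hyz : y ≠ z) (h : y ⬝ᵥ y ≤ z ⬝ᵥ z) :
    z ⬝ᵥ y < z ⬝ᵥ z := by
  have hpos : 0 < (y - z) ⬝ᵥ (y - z) :=
    (Fintype.sum_nonneg fun i => mul_self_nonneg _).lt_of_ne
      (Ne.symm (dotProduct_self_eq_zero.not.mpr (sub_ne_zero.mpr hyz)))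
  simp only [sub_dotProduct, dotProduct_sub, dotProduct_comm y z] at hpos
  linarith

lemma IsConfiguration.ne_zero {ι : Type*} [Fintype ι] {B : Set (ι → ℕ)}
    (hB : IsConfiguration B) {b : ι → ℕ} (hb : b ∈ B) : b ≠ 0 := by
  rintro rfl
  obtain ⟨ω, hω⟩ := hB.2
  simpa using hω 0 hb

/-- A point of `B` of maximal Euclidean norm is exposed by `x ↦ ⟪b, b - x⟫`, which is linear
on the hyperplane containing `B`. -/
theorem IsConfiguration.exists_exposed_vertex {ι : Type*} [Fintype ι] {B : Set (ι → ℕ)}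
    (hB : IsConfiguration B) (hne : B.Nonempty) :
    ∃ b ∈ B, ∃ w : ι → ℚ, ∀ x ∈ B, 0 ≤ pairing w (vecZ x) ∧ (pairing w (vecZ x) = 0 ↔ x = b) := by
  obtain ⟨ω, hω⟩ := hB.2
  let q : (ι → ℕ) → ι → ℚ := fun x => vecQ (vecZ x)
  have hq : Function.Injective q := fun x y h =>
    funext fun i => by simpa [q, vecQ, vecZ] using congrFun h i
  obtain ⟨b, hb, hmax⟩ := Set.exists_max_image B (fun x => q x ⬝ᵥ q x) hB.1 hne
  refine ⟨b, hb, (q b ⬝ᵥ q b) • ω - q b, fun x hx => ?_⟩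
  have hval : pairing ((q b ⬝ᵥ q b) • ω - q b) (vecZ x) = q b ⬝ᵥ q b - q b ⬝ᵥ q x := by
    have hωx : ω ⬝ᵥ q x = 1 := by rw [← hω x hx, ← pairing_vecZ]; rfl
    rw [pairing_apply, sub_dotProduct, smul_dotProduct, hωx, smul_eq_mul, mul_one]
  rw [hval, sub_nonneg, sub_eq_zero]
  rcases eq_or_ne x b with rfl | hxb
  · simp
  · have := dotProduct_lt_dotProduct_self_of_ne (hq.ne hxb) (hmax x hx)
    exact ⟨this.le, fun h => absurd h.symm this.ne, fun h => absurd h hxb⟩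

lemma eq_replicate_of_sum_eq_zero {α : Type*} [AddCommMonoid α] {f : α →+ ℚ} {b : α}
    {c : Multiset α} (hc : ∀ x ∈ c, 0 ≤ f x ∧ (f x = 0 ↔ x = b)) (h : f c.sum = 0) :
    c = Multiset.replicate (Multiset.card c) b := by
  rw [map_multiset_sum] at h
  have := Multiset.all_zero_of_le_zero_le_of_sum_eq_zero
    (by simpa using fun x hx => (hc x hx).1) h
  exact Multiset.eq_replicate_card.mpr fun x hx =>
    (hc x hx).2.mp (this _ (Multiset.mem_map_of_mem f hx))

section Nested
variable {d : ℕ} {μ : Fin d → ℕ}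

/-- The exponent matrix of the monomial map `t_i ↦ u^{b_i}` with `b_i` in the `i`-th block. -/
def blockMatrix (b : ∀ i : Fin d, Fin (μ i) → ℕ) : Matrix (Σ j : Fin d, Fin (μ j)) (Fin d) ℕ :=
  Matrix.of fun p i => if p.1 = i then b p.1 p.2 else 0

lemma sum_blockEmb_apply (f : ∀ i : Fin d, Fin (μ i) → ℕ) (i : Fin d) (j : Fin (μ i)) :
    (∑ k, blockEmb μ k (f k)) ⟨i, j⟩ = f i j := by
  rw [Finset.sum_apply, Finset.sum_eq_single i (fun k _ hk => dif_neg (Ne.symm hk)) (by simp)]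
  exact dif_pos rfl

lemma blockMatrix_mulVec (b : ∀ i : Fin d, Fin (μ i) → ℕ) (a : Fin d → ℕ) :
    blockMatrix b *ᵥ a = ∑ i, blockEmb μ i (a i • b i) := by
  funext ⟨i, j⟩
  rw [sum_blockEmb_apply]
  simp [blockMatrix, Matrix.mulVec, dotProduct, mul_comm]

lemma injective_blockMatrix_mulVec {b : ∀ i : Fin d, Fin (μ i) → ℕ} (hb : ∀ i, b i ≠ 0) :
    Function.Injective ((blockMatrix b).map ((↑) : ℕ → ℤ)).mulVec := by
  intro x y hxy
  funext i
  obtain ⟨j, hj⟩ := Function.ne_iff.mp (hb i)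
  have := congrFun hxy ⟨i, j⟩
  simp [blockMatrix, Matrix.mulVec, dotProduct] at this
  exact this.resolve_right hj

lemma pairing_vecZ_sum_blockEmb (w : ∀ i : Fin d, Fin (μ i) → ℚ)
    (f : ∀ i : Fin d, Fin (μ i) → ℕ) :
    pairing (fun p => w p.1 p.2) (vecZ (∑ i, blockEmb μ i (f i))) =
      ∑ i, pairing (w i) (vecZ (f i)) := by
  simp only [pairing_vecZ, ← Finset.univ_sigma_univ, Finset.sum_sigma, sum_blockEmb_apply]

theorem isFaceEmbedding_blockMatrix (A : Set (Fin d → ℕ)) {B : ∀ i, Set (Fin (μ i) → ℕ)}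
    {b : ∀ i, Fin (μ i) → ℕ} {w : ∀ i, Fin (μ i) → ℚ} (hb : ∀ i, b i ∈ B i) (hb0 : ∀ i, b i ≠ 0)
    (hw : ∀ i, ∀ x ∈ B i, 0 ≤ pairing (w i) (vecZ x) ∧ (pairing (w i) (vecZ x) = 0 ↔ x = b i)) :
    IsFaceEmbedding (blockMatrix b) A (Nested A B) := by
  let f i : (Fin (μ i) → ℕ) →+ ℚ := (pairing (w i)).comp ((Nat.castAddMonoidHom ℤ).compLeft _)
  have hf : ∀ i x, f i x = pairing (w i) (vecZ x) := fun _ _ => rfl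
  have hblock : ∀ i (c : Multiset (Fin (μ i) → ℕ)), (∀ x ∈ c, x ∈ B i) → 0 ≤ f i c.sum :=
    fun i c hc => by
      rw [map_multiset_sum]
      exact Multiset.sum_nonneg (by simpa [hf] using fun x hx => (hw i x (hc x hx)).1)
  refine ⟨injective_blockMatrix_mulVec hb0, fun p => w p.1 p.2, ?_, ?_⟩
  · rintro v ⟨a, -, c, -, hc, rfl⟩
    rw [pairing_vecZ_sum_blockEmb]
    exact Finset.sum_nonneg fun i _ => hblock i (c i) (hc i)
  ext v
  constructor
  · rintro ⟨a, ha, rfl⟩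
    refine ⟨⟨a, ha, fun i => Multiset.replicate (a i) (b i), by simp,
      fun i x hx => Multiset.eq_of_mem_replicate hx ▸ hb i, by simp [blockMatrix_mulVec]⟩, ?_⟩
    dsimp only
    rw [blockMatrix_mulVec, pairing_vecZ_sum_blockEmb]
    refine Finset.sum_eq_zero fun i _ => ?_
    rw [← hf, map_nsmul, hf, ((hw i _ (hb i)).2.mpr rfl), smul_zero]
  · rintro ⟨⟨a, ha, c, hcard, hc, rfl⟩, h0⟩
    rw [pairing_vecZ_sum_blockEmb] at h0
    have hzero := (Finset.sum_eq_zero_iff_of_nonneg fun i _ => hblock i (c i) (hc i)).mp h0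
    have hrep : ∀ i, c i = Multiset.replicate (a i) (b i) := fun i =>
      hcard i ▸ eq_replicate_of_sum_eq_zero (f := f i) (fun x hx => hw i x (hc i x hx))
        (hzero i (Finset.mem_univ i))
    exact ⟨a, ha, by simp [blockMatrix_mulVec, hrep]⟩

theorem exists_isFaceEmbedding_nested (A : Set (Fin d → ℕ)) {B : ∀ i, Set (Fin (μ i) → ℕ)}
    (hB : ∀ i, IsConfiguration (B i)) (hBne : ∀ i, (B i).Nonempty) :
    ∃ M, IsFaceEmbedding M A (Nested A B) := by
  choose b hb w hw using fun i => (hB i).exists_exposed_vertex (hBne i)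
  exact ⟨_, isFaceEmbedding_blockMatrix A hb (fun i => (hB i).ne_zero (hb i)) hw⟩

end Nested

theorem nested_has_cps_isomorphic_to_A_general {d : ℕ} {μ : Fin d → ℕ}
    (A : Set (Fin d → ℕ)) (B : ∀ i : Fin d, Set (Fin (μ i) → ℕ))
    (hB : ∀ i, IsConfiguration (B i))
    (hBne : ∀ i, (B i).Nonempty) :
    (∃ S : Set ((Σ j : Fin d, Fin (μ j)) → ℕ),
        IsCPS S (Nested A B) ∧ Nonempty (↥(nnSpan S) ≃+ ↥(nnSpan A))) ∧
    (IsNormalCfg (Nested A B) → IsNormalCfg A) ∧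
    (IsVeryAmpleCfg (Nested A B) → IsVeryAmpleCfg A) := by
  obtain ⟨M, hM⟩ := exists_isFaceEmbedding_nested A hB hBne
  exact ⟨⟨_, hM.isCPS, hM.nonempty_addEquiv⟩, hM.isNormalCfg, hM.isVeryAmpleCfg⟩

/-- the toric ring of a nested configuration `A(B_1,…,B_d)` has a combinatorial
pure subring isomorphic to `K[A]` (an isomorphism of the underlying affine semigroups);
consequently, if `K[A(B_1,…,B_d)]` is normal (resp. very ample) then so is `K[A]`. -/
theorem nested_has_cps_isomorphic_to_A {d r : ℕ} {μ : Fin d → ℕ}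
    (A : Set (Fin d → ℕ)) (B : ∀ i : Fin d, Set (Fin (μ i) → ℕ))
    (hA : IsConfiguration A)
    (hdeg : ∀ v ∈ A, ∑ i, v i = r)
    (hcov : ∀ i : Fin d, ∃ v ∈ A, v i ≠ 0)
    (hB : ∀ i, IsConfiguration (B i))
    (hBne : ∀ i, (B i).Nonempty) :
    (∃ S : Set ((Σ j : Fin d, Fin (μ j)) → ℕ),
        IsCPS S (Nested A B) ∧ Nonempty (↥(nnSpan S) ≃+ ↥(nnSpan A))) ∧
    (IsNormalCfg (Nested A B) → IsNormalCfg A) ∧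
    (IsVeryAmpleCfg (Nested A B) → IsVeryAmpleCfg A) :=
  nested_has_cps_isomorphic_to_A_general A B hB hBne
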